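/- arXiv:2003.01897 — 4 statements merged into one kernel-verified Lean document; each statement's English description precedes it below -/
import Mathlib

section
/- For fixed λ > 0 the function γ ↦ (b·λ² + σ²·γ²) / (γ² + λ)² of γ ≥ 0 is monotone non-increasing whenever λ ≥ λ* := σ²/(2b), for any b > 0 and σ > 0. (Here b plays the role of ‖β*‖²/d.) -/
/-!
Substituting `u = γ²` (monotone on `γ ≥ 0`) reduces the claim to `u ↦ (a + c u)/(u + λ)²` being
antitone on `u ≥ 0`. Cross-multiplying, for `0 ≤ u ≤ v` the difference of the two sides factors as
`(v - u) (a (u + v) + c u v + λ (2a - cλ))`, and every term is nonnegative once `cλ ≤ 2a`;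
for `a = bλ²`, `c = σ²` this is exactly `λ ≥ σ²/(2b)`.
-/

open Set

lemma antitoneOn_add_mul_div_add_sq {a c lam : ℝ} (hlam : 0 < lam) (hc : 0 ≤ c)
    (h : c * lam ≤ 2 * a) :
    AntitoneOn (fun u : ℝ => (a + c * u) / (u + lam) ^ 2) (Ici 0) := by
  intro u (hu : 0 ≤ u) v (hv : 0 ≤ v) huv
  have ha : 0 ≤ a := by nlinarith
  have cross : (a + c * u) * (v + lam) ^ 2 - (a + c * v) * (u + lam) ^ 2
      = (v - u) * (a * (u + v) + c * u * v + lam * (2 * a - c * lam)) := by ring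
  have cross_nonneg : 0 ≤ (v - u) * (a * (u + v) + c * u * v + lam * (2 * a - c * lam)) := by
    have : 0 ≤ 2 * a - c * lam := by linarith
    apply mul_nonneg (by linarith)
    positivity
  rw [div_le_div_iff₀ (by positivity) (by positivity)]
  linarith

theorem antitoneOn_scalarized_risk_general (b σ lam : ℝ) (hb : 0 < b) (hlam : 0 < lam)
    (h : σ ^ 2 / (2 * b) ≤ lam) :
    AntitoneOn (fun γ : ℝ => (b * lam ^ 2 + σ ^ 2 * γ ^ 2) / (γ ^ 2 + lam) ^ 2)
      (Set.Ici (0 : ℝ)) := by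
  have hσ2 : σ ^ 2 * lam ≤ 2 * (b * lam ^ 2) := by
    rw [div_le_iff₀ (by positivity)] at h
    nlinarith
  exact (antitoneOn_add_mul_div_add_sq hlam (sq_nonneg σ) hσ2).comp_MonotoneOn
    pow_left_monotoneOn fun γ _ => sq_nonneg γ

/-- For fixed `λ > 0`, the function `γ ↦ (b λ² + σ² γ²)/(γ² + λ)²` is monotone non-increasing on
`γ ≥ 0` whenever `λ ≥ σ²/(2b)`, for any `b > 0` and `σ > 0`. -/
theorem antitoneOn_scalarized_risk (b σ lam : ℝ) (hb : 0 < b) (hσ : 0 < σ) (hlam : 0 < lam)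
    (h : σ ^ 2 / (2 * b) ≤ lam) :
    AntitoneOn (fun γ : ℝ => (b * lam ^ 2 + σ ^ 2 * γ ^ 2) / (γ ^ 2 + lam) ^ 2)
      (Set.Ici (0 : ℝ)) :=
  antitoneOn_scalarized_risk_general b σ lam hb hlam h
end

section
/- Optimal ridge parameter in the scalarized risk: for fixed nonnegative reals γ_1,…,γ_d (not all determining a degenerate case), the function λ ↦ Σ_{i=1}^d (B λ²/d + σ² γ_i²)/(γ_i²+λ)² on (0,∞), where B = ‖β*‖² > 0 and σ > 0, has derivative equal to 2(Bλ/d − σ²)·Σ_i γ_i²/(γ_i²+λ)³; hence it is minimized at λ = dσ²/B whenever some γ_i > 0. -/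
/-!
With `L = dσ²/B` and `g = γᵢ²`, the `i`-th summand is `B/d` times
`(λ² + Lg)/(g + λ)² = L/(g + L) + g(λ - L)²/((g + λ)²(g + L))`,
so every summand separately attains its minimum at `λ = L`.
-/

theorem hasDerivAt_ridge_term (a s g l : ℝ) (hl : g + l ≠ 0) :
    HasDerivAt (fun x => (a * x ^ 2 + s * g) / (g + x) ^ 2)
      (2 * (a * l - s) * (g / (g + l) ^ 3)) l := by
  have hnum : HasDerivAt (fun x => a * x ^ 2 + s * g) (a * (2 * l)) l := by
    simpa using ((hasDerivAt_pow 2 l).const_mul a).add_const (s * g)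
  have hden : HasDerivAt (fun x => (g + x) ^ 2) (2 * (g + l)) l := by
    simpa using ((hasDerivAt_id l).const_add g).fun_pow 2
  refine (hnum.fun_div hden (pow_ne_zero 2 hl)).congr_deriv ?_
  field_simp
  ring

theorem ridge_ratio_eq_add (g L l : ℝ) (hl : g + l ≠ 0) (hL : g + L ≠ 0) :
    (l ^ 2 + L * g) / (g + l) ^ 2 = L / (g + L) + g * (l - L) ^ 2 / ((g + l) ^ 2 * (g + L)) := by
  field_simp
  ring

theorem ridge_ratio_self (g L : ℝ) (hL : g + L ≠ 0) :
    (L ^ 2 + L * g) / (g + L) ^ 2 = L / (g + L) := by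
  simpa using ridge_ratio_eq_add g L L hL hL

theorem ridge_ratio_le {g L l : ℝ} (hg : 0 ≤ g) (hL : 0 < L) (hl : 0 < l) :
    (L ^ 2 + L * g) / (g + L) ^ 2 ≤ (l ^ 2 + L * g) / (g + l) ^ 2 := by
  rw [ridge_ratio_self g L (by positivity), ridge_ratio_eq_add g L l (by positivity) (by positivity)]
  exact le_add_of_nonneg_right (by positivity)

theorem optimal_ridge_parameter_general (d : ℕ) (hd : 0 < d) (B σ : ℝ) (hB : 0 < B) (hσ : 0 < σ)
    (γ : Fin d → ℝ) :
    (∀ lam : ℝ, 0 < lam →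
      HasDerivAt
        (fun l : ℝ => ∑ i, (B * l ^ 2 / (d : ℝ) + σ ^ 2 * γ i ^ 2) / (γ i ^ 2 + l) ^ 2)
        (2 * (B * lam / (d : ℝ) - σ ^ 2) * ∑ i, γ i ^ 2 / (γ i ^ 2 + lam) ^ 3) lam) ∧
    ∀ lam : ℝ, 0 < lam →
      ∑ i, (B * ((d : ℝ) * σ ^ 2 / B) ^ 2 / (d : ℝ) + σ ^ 2 * γ i ^ 2)
          / (γ i ^ 2 + (d : ℝ) * σ ^ 2 / B) ^ 2
        ≤ ∑ i, (B * lam ^ 2 / (d : ℝ) + σ ^ 2 * γ i ^ 2) / (γ i ^ 2 + lam) ^ 2 := by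
  have hd' : (0 : ℝ) < d := Nat.cast_pos.mpr hd
  set L := (d : ℝ) * σ ^ 2 / B
  have hsummand (x g : ℝ) :
      (B * x ^ 2 / d + σ ^ 2 * g) / (g + x) ^ 2 = B / d * ((x ^ 2 + L * g) / (g + x) ^ 2) := by
    simp only [L]
    field_simp
  refine ⟨fun lam hlam => ?_, fun lam hlam => ?_⟩
  · rw [Finset.mul_sum]
    refine HasDerivAt.fun_sum fun i _ => ?_
    simpa only [mul_div_right_comm B] using
      hasDerivAt_ridge_term (B / d) (σ ^ 2) (γ i ^ 2) lam (by positivity)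
  · simp only [hsummand]
    gcongr ∑ i, _ * ?_ with i
    exact ridge_ratio_le (sq_nonneg _) (by positivity) hlam

/-- Optimal ridge parameter in the scalarized risk: the function
`f(λ) = ∑ᵢ (Bλ²/d + σ²γᵢ²)/(γᵢ²+λ)²` on `(0,∞)` has derivative
`2(Bλ/d − σ²) ∑ᵢ γᵢ²/(γᵢ²+λ)³`; hence it is minimized at `λ = dσ²/B`
whenever some `γᵢ > 0`. -/
theorem optimal_ridge_parameter (d : ℕ) (hd : 0 < d) (B σ : ℝ) (hB : 0 < B) (hσ : 0 < σ)
    (γ : Fin d → ℝ) (hγ : ∀ i, 0 ≤ γ i) (hpos : ∃ i, 0 < γ i) :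
    (∀ lam : ℝ, 0 < lam →
      HasDerivAt
        (fun l : ℝ => ∑ i, (B * l ^ 2 / (d : ℝ) + σ ^ 2 * γ i ^ 2) / (γ i ^ 2 + l) ^ 2)
        (2 * (B * lam / (d : ℝ) - σ ^ 2) * ∑ i, γ i ^ 2 / (γ i ^ 2 + lam) ^ 3) lam) ∧
    ∀ lam : ℝ, 0 < lam →
      ∑ i, (B * ((d : ℝ) * σ ^ 2 / B) ^ 2 / (d : ℝ) + σ ^ 2 * γ i ^ 2)
          / (γ i ^ 2 + (d : ℝ) * σ ^ 2 / B) ^ 2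
        ≤ ∑ i, (B * lam ^ 2 / (d : ℝ) + σ ^ 2 * γ i ^ 2) / (γ i ^ 2 + lam) ^ 2 :=
  optimal_ridge_parameter_general d hd B σ hB hσ γ
end

section
/- Over-regularization monotonicity (deterministic core): if λ ≥ dσ²/(2‖β*‖²) and 0 ≤ γ_i ≤ γ̃_i for all i, then Σ_{i=1}^d (‖β*‖²λ²/d + σ²γ̃_i²)/(γ̃_i²+λ)² ≤ Σ_{i=1}^d (‖β*‖²λ²/d + σ²γ_i²)/(γ_i²+λ)². -/
/-!
Writing `x = γᵢ²`, each summand is `f x = (c + s x) / (x + λ)²` with `c = ‖β*‖²λ²/d` and `s = σ²`,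
and `f x - f y` factors as `(y - x) (c (x + y) + λ (2c - sλ) + s x y) / ((x + λ)² (y + λ)²)`.
The hypothesis on `λ` is exactly `sλ ≤ 2c`, so `f` is antitone on `[0, ∞)` and the sums compare
termwise.
-/

lemma affine_div_sq_antitoneOn {c s lam : ℝ} (hs : 0 ≤ s) (hlam : 0 < lam)
    (hc : s * lam ≤ 2 * c) :
    AntitoneOn (fun x => (c + s * x) / (x + lam) ^ 2) (Set.Ici 0) := by
  intro x (hx : 0 ≤ x) y (hy : 0 ≤ y) hxy
  have hc0 : 0 ≤ c := by nlinarith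
  rw [div_le_div_iff₀ (by positivity) (by positivity)]
  have key : (c + s * x) * (y + lam) ^ 2 - (c + s * y) * (x + lam) ^ 2
      = (y - x) * (c * (x + y) + lam * (2 * c - s * lam) + s * x * y) := by ring
  have hgap : 0 ≤ 2 * c - s * lam := sub_nonneg.2 hc
  have : 0 ≤ (y - x) * (c * (x + y) + lam * (2 * c - s * lam) + s * x * y) :=
    mul_nonneg (sub_nonneg.2 hxy) (by positivity)
  linarith

lemma sum_sq_pos_of_ne_zero {ι : Type*} [Fintype ι] {v : ι → ℝ} (hv : v ≠ 0) :
    0 < ∑ j, v j ^ 2 := by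
  obtain ⟨j, hj⟩ := Function.ne_iff.1 hv
  exact Finset.sum_pos' (fun i _ => sq_nonneg (v i)) ⟨j, Finset.mem_univ j, sq_pos_of_ne_zero hj⟩

theorem overregularization_monotone_general (d : ℕ) (σ lam : ℝ)
    (β : Fin d → ℝ) (hβ : β ≠ 0) (hlam : 0 < lam)
    (h : (d : ℝ) * σ ^ 2 / (2 * ∑ j, β j ^ 2) ≤ lam)
    (γ γt : Fin d → ℝ) (hγ : ∀ i, 0 ≤ γ i) (hle : ∀ i, γ i ≤ γt i) :
    ∑ i, ((∑ j, β j ^ 2) * lam ^ 2 / (d : ℝ) + σ ^ 2 * γt i ^ 2) / (γt i ^ 2 + lam) ^ 2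
      ≤ ∑ i, ((∑ j, β j ^ 2) * lam ^ 2 / (d : ℝ) + σ ^ 2 * γ i ^ 2)
          / (γ i ^ 2 + lam) ^ 2 := by
  refine Finset.sum_le_sum fun i _ => ?_
  have hd : (0 : ℝ) < d := Nat.cast_pos.2 i.pos
  have hB := sum_sq_pos_of_ne_zero hβ
  have hdσ : (d : ℝ) * σ ^ 2 ≤ lam * (2 * ∑ j, β j ^ 2) := (div_le_iff₀ (by positivity)).1 h
  have hc : σ ^ 2 * lam ≤ 2 * ((∑ j, β j ^ 2) * lam ^ 2 / d) := by
    rw [mul_div_assoc', le_div_iff₀ hd]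
    nlinarith
  have hsq : γ i ^ 2 ≤ γt i ^ 2 := pow_le_pow_left₀ (hγ i) (hle i) 2
  exact affine_div_sq_antitoneOn (sq_nonneg σ) hlam hc (sq_nonneg (γ i))
    ((sq_nonneg (γ i)).trans hsq) hsq

/-- Over-regularization monotonicity (deterministic core): if `λ ≥ dσ²/(2‖β*‖²)` and
`0 ≤ γᵢ ≤ γ̃ᵢ` for all `i`, then
`∑ᵢ (‖β*‖²λ²/d + σ²γ̃ᵢ²)/(γ̃ᵢ²+λ)² ≤ ∑ᵢ (‖β*‖²λ²/d + σ²γᵢ²)/(γᵢ²+λ)²`. -/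
theorem overregularization_monotone (d : ℕ) (σ lam : ℝ) (hσ : 0 < σ)
    (β : Fin d → ℝ) (hβ : β ≠ 0) (hlam : 0 < lam)
    (h : (d : ℝ) * σ ^ 2 / (2 * ∑ j, β j ^ 2) ≤ lam)
    (γ γt : Fin d → ℝ) (hγ : ∀ i, 0 ≤ γ i) (hle : ∀ i, γ i ≤ γt i) :
    ∑ i, ((∑ j, β j ^ 2) * lam ^ 2 / (d : ℝ) + σ ^ 2 * γt i ^ 2) / (γt i ^ 2 + lam) ^ 2
      ≤ ∑ i, ((∑ j, β j ^ 2) * lam ^ 2 / (d : ℝ) + σ ^ 2 * γ i ^ 2)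
          / (γ i ^ 2 + lam) ^ 2 :=
  overregularization_monotone_general d σ lam β hβ hlam h γ γt hγ hle
end

section
/- First-order optimality transfer implies monotonicity (abstract form): let G_λ, G'_λ be symmetric PSD-matrix-valued differentiable functions of λ > 0, H_λ, H'_λ real-valued differentiable with dH_λ/dλ < 0, and suppose at some λ₀ > 0: (i) βᵀ(dG/dλ)β + σ²(dH/dλ) = 0 at λ₀ (first-order optimality), (ii) G_{λ₀} − G'_{λ₀} ⪰ 0, (iii) (G_{λ₀} − G'_{λ₀}) − (H_{λ₀} − H'_{λ₀})·(dG_λ/dλ)/(dH_λ/dλ)|_{λ₀} ⪰ 0. Then βᵀG_{λ₀}β + σ²H_{λ₀} ≥ βᵀG'_{λ₀}β + σ²H'_{λ₀}. -/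
open Matrix

/-! Evaluating (iii) at `β` and using (i) to replace `βᵀ(dG/dλ)β` by `-σ² dH/dλ` turns the
quadratic form inequality of (iii) into the claim. -/

theorem Matrix.PosSemidef.smul_dotProduct_mulVec_le {n : Type*} [Fintype n]
    {A B : Matrix n n ℝ} {c : ℝ} (h : (A - c • B).PosSemidef) (x : n → ℝ) :
    c * (x ⬝ᵥ B *ᵥ x) ≤ x ⬝ᵥ A *ᵥ x := by
  have hx := h.dotProduct_mulVec_nonneg x
  rw [sub_mulVec, smul_mulVec, dotProduct_sub, dotProduct_smul, smul_eq_mul] at hx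
  simpa using hx

theorem optimality_transfer_monotonicity_general (d : ℕ) (σ : ℝ) (β : Fin d → ℝ)
    (G G' Gd : ℝ → Matrix (Fin d) (Fin d) ℝ) (H H' Hd : ℝ → ℝ)
    (hHd : ∀ l : ℝ, Hd l < 0)
    (l0 : ℝ)
    (hfoc : β ⬝ᵥ (Gd l0).mulVec β + σ ^ 2 * Hd l0 = 0)
    (hiii : ((G l0 - G' l0) - ((H l0 - H' l0) / Hd l0) • Gd l0).PosSemidef) :
    β ⬝ᵥ (G' l0).mulVec β + σ ^ 2 * H' l0 ≤ β ⬝ᵥ (G l0).mulVec β + σ ^ 2 * H l0 := by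
  have hquad := hiii.smul_dotProduct_mulVec_le β
  have hGd : β ⬝ᵥ Gd l0 *ᵥ β = -(σ ^ 2 * Hd l0) := by linarith
  have htransfer : (H l0 - H' l0) / Hd l0 * -(σ ^ 2 * Hd l0) = -(σ ^ 2 * (H l0 - H' l0)) := by
    field_simp [(hHd l0).ne]
  rw [hGd, htransfer, sub_mulVec, dotProduct_sub] at hquad
  linarith

/-- First-order optimality transfer implies monotonicity (abstract form): given symmetric
PSD-matrix-valued differentiable `G, G'` and real differentiable `H, H'` with `dH/dλ < 0`, if at
some `λ₀ > 0` we have (i) `βᵀ(dG/dλ)β + σ²(dH/dλ) = 0`, (ii) `G_{λ₀} − G'_{λ₀} ⪰ 0`, and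
(iii) `(G_{λ₀} − G'_{λ₀}) − (H_{λ₀} − H'_{λ₀})·(dG/dλ)/(dH/dλ) ⪰ 0`, then
`βᵀG_{λ₀}β + σ²H_{λ₀} ≥ βᵀG'_{λ₀}β + σ²H'_{λ₀}`. -/
theorem optimality_transfer_monotonicity (d : ℕ) (σ : ℝ) (hσ : 0 < σ) (β : Fin d → ℝ)
    (G G' Gd Gd' : ℝ → Matrix (Fin d) (Fin d) ℝ) (H H' Hd Hd' : ℝ → ℝ)
    (hGpsd : ∀ l : ℝ, 0 < l → (G l).PosSemidef ∧ (G' l).PosSemidef)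
    (hG : ∀ (l : ℝ) (i j : Fin d), HasDerivAt (fun t => G t i j) (Gd l i j) l)
    (hG' : ∀ (l : ℝ) (i j : Fin d), HasDerivAt (fun t => G' t i j) (Gd' l i j) l)
    (hH : ∀ l : ℝ, HasDerivAt H (Hd l) l)
    (hH' : ∀ l : ℝ, HasDerivAt H' (Hd' l) l)
    (hHd : ∀ l : ℝ, Hd l < 0)
    (l0 : ℝ) (hl0 : 0 < l0)
    (hfoc : β ⬝ᵥ (Gd l0).mulVec β + σ ^ 2 * Hd l0 = 0)
    (hii : (G l0 - G' l0).PosSemidef)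
    (hiii : ((G l0 - G' l0) - ((H l0 - H' l0) / Hd l0) • Gd l0).PosSemidef) :
    β ⬝ᵥ (G' l0).mulVec β + σ ^ 2 * H' l0 ≤ β ⬝ᵥ (G l0).mulVec β + σ ^ 2 * H l0 :=
  optimality_transfer_monotonicity_general d σ β G G' Gd H H' Hd hHd l0 hfoc hiii
end
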